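/- Let γ > 0 and let v : [0,T] × ℝⁿ → ℝ be C^{1,2}. Define ψ(s,x) := exp(-v(s,x)/γ). Suppose v satisfies the nonlinear PDE -∂ₛv = ℓ(x) - (1/2)(∂ₓv)ᵀ M(x) (∂ₓv)/γ · γ + f(x)ᵀ∂ₓv + (1/2)tr[G(x) ∂ₓₓv], where M(x) = h(x)R⁻¹h(x)ᵀ and G(x) = g(x)g(x)ᵀ, and assume γ*M(x) = G(x) for all x. Then ψ satisfies the linear PDE -∂ₛψ = -(1/γ)*ℓ(x)*ψ + f(x)ᵀ∂ₓψ + (1/2)tr[G(x) ∂ₓₓψ]. -/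

import Mathlib

/-! With `ψ = exp (-v / γ)` the chain rule gives `∂ψ = -(ψ / γ) ∂v` in time and space, and
`∂ₓₓψ = (ψ / γ²) ∂ₓv ∂ₓvᵀ - (ψ / γ) ∂ₓₓv`. Inserted into the linear equation, the rank-one
part of the Hessian contributes `tr (G ∂ₓv ∂ₓvᵀ) ψ / (2γ²) = (∂ₓv)ᵀ M ∂ₓv ψ / (2γ)` because
`G = γ M`, which is exactly `-ψ / γ` times the quadratic term of the HJB equation; so the linear
equation for `ψ` is the HJB equation for `v` multiplied by `-ψ / γ`. -/

open Matrix

section Gradient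

variable {F : Type*} [NormedAddCommGroup F] [InnerProductSpace ℝ F] [CompleteSpace F]
  {u w : F → ℝ} {u' w' x : F}

theorem HasDerivAt.comp_hasGradientAt {φ : ℝ → ℝ} {φ' : ℝ} (hφ : HasDerivAt φ φ' (u x))
    (hu : HasGradientAt u u' x) : HasGradientAt (φ ∘ u) (φ' • u') x := by
  rw [hasGradientAt_iff_hasFDerivAt] at hu ⊢
  exact (hφ.comp_hasFDerivAt x hu).congr_fderiv (map_smul _ _ _).symm

theorem HasGradientAt.mul (hu : HasGradientAt u u' x) (hw : HasGradientAt w w' x) :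
    HasGradientAt (fun y => u y * w y) (u x • w' + w x • u') x := by
  rw [hasGradientAt_iff_hasFDerivAt] at hu hw ⊢
  exact (hu.mul hw).congr_fderiv (by rw [map_add, map_smul, map_smul])

end Gradient

theorem hasDerivAt_exp_neg_div (γ t : ℝ) :
    HasDerivAt (fun t => Real.exp (-t / γ)) (-Real.exp (-t / γ) / γ) t := by
  simpa [neg_div, div_eq_mul_inv] using ((hasDerivAt_id t).neg.div_const γ).exp

theorem hasDerivAt_neg_exp_neg_div_div (γ t : ℝ) :
    HasDerivAt (fun t => -Real.exp (-t / γ) / γ) (Real.exp (-t / γ) / γ ^ 2) t :=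
  ((hasDerivAt_exp_neg_div γ t).neg.div_const γ).congr_deriv (by ring)

theorem Matrix.trace_mul_vecMulVec {ι κ R : Type*} [Fintype ι] [Fintype κ] [NonUnitalSemiring R]
    (A : Matrix ι κ R) (p : κ → R) (q : ι → R) : trace (A * vecMulVec p q) = A *ᵥ p ⬝ᵥ q := by
  rw [mul_vecMulVec, trace_vecMulVec]

theorem linear_pde_of_hjb {ι : Type*} [Fintype ι] {γ ψ ℓ vs : ℝ} {b p : EuclideanSpace ℝ ι}
    {M G H : Matrix ι ι ℝ} (hγ : γ ≠ 0) (hcompat : γ • M = G)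
    (hHJB : -vs = ℓ - 1 / 2 * (M *ᵥ p ⬝ᵥ p) + inner ℝ b p + 1 / 2 * trace (G * H)) :
    -(-ψ / γ * vs) = -(1 / γ) * ℓ * ψ + inner ℝ b ((-ψ / γ) • p)
      + 1 / 2 * trace (G * ((ψ / γ ^ 2) • vecMulVec p p - (ψ / γ) • H)) := by
  have hquad : ψ / γ ^ 2 * trace (G * vecMulVec p p) = ψ / γ * (M *ᵥ p ⬝ᵥ p) := by
    rw [trace_mul_vecMulVec, ← hcompat, smul_mulVec, smul_dotProduct, smul_eq_mul]
    field_simp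
  rw [real_inner_smul_right, Matrix.mul_sub, Matrix.mul_smul, Matrix.mul_smul, trace_sub,
    trace_smul, trace_smul, smul_eq_mul, smul_eq_mul, hquad]
  linear_combination (-ψ / γ) * hHJB

theorem log_transform_linearizes_hjb_general {n : ℕ} (T γ : ℝ) (hγ : 0 < γ)
    (v vs : ℝ → EuclideanSpace ℝ (Fin n) → ℝ)
    (vx : ℝ → EuclideanSpace ℝ (Fin n) → EuclideanSpace ℝ (Fin n))
    (vxx : ℝ → EuclideanSpace ℝ (Fin n) → Matrix (Fin n) (Fin n) ℝ)
    (ℓ : EuclideanSpace ℝ (Fin n) → ℝ)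
    (f : EuclideanSpace ℝ (Fin n) → EuclideanSpace ℝ (Fin n))
    (M G : EuclideanSpace ℝ (Fin n) → Matrix (Fin n) (Fin n) ℝ)
    (hcompat : ∀ x, γ • M x = G x)
    (hvs : ∀ s x, HasDerivAt (fun t => v t x) (vs s x) s)
    (hvx : ∀ s x, HasGradientAt (v s) (vx s x) x)
    (hvxx : ∀ s x i, HasGradientAt (fun y => vx s y i)
      ((EuclideanSpace.equiv (Fin n) ℝ).symm fun j => vxx s x i j) x)
    (hPDE : ∀ s ∈ Set.Icc (0 : ℝ) T, ∀ x,
      -vs s x = ℓ x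
        - (1 / 2) * ((M x).mulVec (EuclideanSpace.equiv (Fin n) ℝ (vx s x)) ⬝ᵥ
            EuclideanSpace.equiv (Fin n) ℝ (vx s x))
        + inner ℝ (f x) (vx s x)
        + (1 / 2) * Matrix.trace (G x * vxx s x)) :
    ∃ (ψs : ℝ → EuclideanSpace ℝ (Fin n) → ℝ)
      (ψx : ℝ → EuclideanSpace ℝ (Fin n) → EuclideanSpace ℝ (Fin n))
      (ψxx : ℝ → EuclideanSpace ℝ (Fin n) → Matrix (Fin n) (Fin n) ℝ),
      (∀ s x, HasDerivAt (fun t => Real.exp (-v t x / γ)) (ψs s x) s) ∧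
      (∀ s x, HasGradientAt (fun y => Real.exp (-v s y / γ)) (ψx s x) x) ∧
      (∀ s x i, HasGradientAt (fun y => ψx s y i)
        ((EuclideanSpace.equiv (Fin n) ℝ).symm fun j => ψxx s x i j) x) ∧
      (∀ s ∈ Set.Icc (0 : ℝ) T, ∀ x,
        -ψs s x = -(1 / γ) * ℓ x * Real.exp (-v s x / γ)
          + inner ℝ (f x) (ψx s x)
          + (1 / 2) * Matrix.trace (G x * ψxx s x)) := by
  refine ⟨fun s x => -Real.exp (-v s x / γ) / γ * vs s x,
    fun s x => (-Real.exp (-v s x / γ) / γ) • vx s x,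
    fun s x => (Real.exp (-v s x / γ) / γ ^ 2) • vecMulVec ⇑(vx s x) ⇑(vx s x)
      - (Real.exp (-v s x / γ) / γ) • vxx s x, ?_, ?_, ?_, ?_⟩
  · exact fun s x => ((hasDerivAt_exp_neg_div γ (v s x)).comp s (hvs s x) :)
  · exact fun s x => ((hasDerivAt_exp_neg_div γ (v s x)).comp_hasGradientAt (hvx s x) :)
  · intro s x i
    convert ((hasDerivAt_neg_exp_neg_div_div γ (v s x)).comp_hasGradientAt (hvx s x)).mul
      (hvxx s x i) using 1
    · rfl
    · ext j
      simp only [PiLp.add_apply, PiLp.smul_apply, PiLp.continuousLinearEquiv_symm_apply,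
        Matrix.sub_apply, Matrix.smul_apply, vecMulVec_apply, Function.comp_apply, smul_eq_mul]
      ring
  · exact fun s hs x => linear_pde_of_hjb hγ.ne' (hcompat x) (hPDE s hs x)

theorem log_transform_linearizes_hjb {n m d : ℕ} (T γ : ℝ) (hT : 0 < T) (hγ : 0 < γ)
    (v vs : ℝ → EuclideanSpace ℝ (Fin n) → ℝ)
    (vx : ℝ → EuclideanSpace ℝ (Fin n) → EuclideanSpace ℝ (Fin n))
    (vxx : ℝ → EuclideanSpace ℝ (Fin n) → Matrix (Fin n) (Fin n) ℝ)
    (ℓ : EuclideanSpace ℝ (Fin n) → ℝ)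
    (f : EuclideanSpace ℝ (Fin n) → EuclideanSpace ℝ (Fin n))
    (h : EuclideanSpace ℝ (Fin n) → Matrix (Fin n) (Fin m) ℝ)
    (g : EuclideanSpace ℝ (Fin n) → Matrix (Fin n) (Fin d) ℝ)
    (R : Matrix (Fin m) (Fin m) ℝ) (hR : R.PosDef)
    (M G : EuclideanSpace ℝ (Fin n) → Matrix (Fin n) (Fin n) ℝ)
    (hM : ∀ x, M x = h x * R⁻¹ * (h x)ᵀ)
    (hG : ∀ x, G x = g x * (g x)ᵀ)
    (hcompat : ∀ x, γ • M x = G x)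
    (hvs : ∀ s x, HasDerivAt (fun t => v t x) (vs s x) s)
    (hvx : ∀ s x, HasGradientAt (v s) (vx s x) x)
    (hvxx : ∀ s x i, HasGradientAt (fun y => vx s y i)
      ((EuclideanSpace.equiv (Fin n) ℝ).symm fun j => vxx s x i j) x)
    (hPDE : ∀ s ∈ Set.Icc (0 : ℝ) T, ∀ x,
      -vs s x = ℓ x
        - (1 / 2) * ((M x).mulVec (EuclideanSpace.equiv (Fin n) ℝ (vx s x)) ⬝ᵥ
            EuclideanSpace.equiv (Fin n) ℝ (vx s x))
        + inner ℝ (f x) (vx s x)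
        + (1 / 2) * Matrix.trace (G x * vxx s x)) :
    ∃ (ψs : ℝ → EuclideanSpace ℝ (Fin n) → ℝ)
      (ψx : ℝ → EuclideanSpace ℝ (Fin n) → EuclideanSpace ℝ (Fin n))
      (ψxx : ℝ → EuclideanSpace ℝ (Fin n) → Matrix (Fin n) (Fin n) ℝ),
      (∀ s x, HasDerivAt (fun t => Real.exp (-v t x / γ)) (ψs s x) s) ∧
      (∀ s x, HasGradientAt (fun y => Real.exp (-v s y / γ)) (ψx s x) x) ∧
      (∀ s x i, HasGradientAt (fun y => ψx s y i)
        ((EuclideanSpace.equiv (Fin n) ℝ).symm fun j => ψxx s x i j) x) ∧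
      (∀ s ∈ Set.Icc (0 : ℝ) T, ∀ x,
        -ψs s x = -(1 / γ) * ℓ x * Real.exp (-v s x / γ)
          + inner ℝ (f x) (ψx s x)
          + (1 / 2) * Matrix.trace (G x * ψxx s x)) :=
  log_transform_linearizes_hjb_general T γ hγ v vs vx vxx ℓ f M G hcompat hvs hvx hvxx hPDE
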